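/- arXiv:0710.2758 — 3 statements merged into one kernel-verified Lean document; each statement's English description precedes it below -/
import Mathlib

section
/- Let Z = (Z^R, Z^S) be an F_t-measurable ℝ²-valued random vector such that E_Q[Z^R α + Z^S β] ≥ 0 for all F_t-measurable random variables α, β with ϑ_t(α,β) = α + β⁺S^b_t − β⁻S^a_t ≥ 0. Then Z^R ≥ 0, Z^S ≥ 0, and Z^R S^b_t ≤ Z^S ≤ Z^R S^a_t everywhere. -/
/-!
Testing `Z` against the position `(α, β) = 1_A • (a, b)` localises the pricing inequality:
since the liquidation value `ϑ` is positively homogeneous, `1_A • (a, b)` is solvent whenever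
`(a, b)` is, and taking `A = {Z^R a + Z^S b < 0}` forces `Z^R a + Z^S b ≥ 0` pointwise, because
`Q` charges every state. The four conclusions are this statement for the solvent positions
`(1, 0)`, `(0, 1)`, `(S^a, -1)` and `(-S^b, 1)`.
-/

open MeasureTheory

/-- The paper's `ϑ_t(a, b) = a + b⁺ S^b_t - b⁻ S^a_t`: the cash obtained by liquidating `a` units
of cash and `b` units of stock at bid `sb` and ask `sa`. -/
def liquidationValue (sb sa a b : ℝ) : ℝ :=
  a + max b 0 * sb - max (-b) 0 * sa

lemma eq_zero_of_nonpos_of_integral_nonneg {Ω : Type*} [Finite Ω] {m0 : MeasurableSpace Ω}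
    [MeasurableSingletonClass Ω] (Q : Measure Ω) [IsFiniteMeasure Q] (hQ : ∀ ω, Q {ω} ≠ 0)
    {f : Ω → ℝ} (hf : f ≤ 0) (hint : 0 ≤ ∫ ω, f ω ∂Q) : f = 0 := by
  have hneg : ∫ ω, -f ω ∂Q = 0 := by
    rw [integral_neg]
    linarith [integral_nonpos (μ := Q) hf]
  have hae := (integral_eq_zero_iff_of_nonneg (neg_nonneg.2 hf) Integrable.of_finite).1 hneg
  funext ω
  simpa using ae_iff_of_countable.1 hae ω (hQ ω)

theorem nonneg_of_liquidationValue_nonneg {Ω : Type*} [Finite Ω] {m0 : MeasurableSpace Ω}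
    [MeasurableSingletonClass Ω] {Q : Measure Ω} [IsFiniteMeasure Q] {m : MeasurableSpace Ω}
    {Sb Sa ZR ZS : Ω → ℝ} (hQ : ∀ ω, Q {ω} ≠ 0)
    (hZRm : StronglyMeasurable[m] ZR) (hZSm : StronglyMeasurable[m] ZS)
    (hpos : ∀ α β : Ω → ℝ, StronglyMeasurable[m] α → StronglyMeasurable[m] β →
      (∀ ω, 0 ≤ liquidationValue (Sb ω) (Sa ω) (α ω) (β ω)) →
      0 ≤ ∫ ω, (ZR ω * α ω + ZS ω * β ω) ∂Q)
    (a b : Ω → ℝ) (ha : StronglyMeasurable[m] a) (hb : StronglyMeasurable[m] b)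
    (hab : ∀ ω, 0 ≤ liquidationValue (Sb ω) (Sa ω) (a ω) (b ω)) (ω : Ω) :
    0 ≤ ZR ω * a ω + ZS ω * b ω := by
  set g : Ω → ℝ := fun ω => ZR ω * a ω + ZS ω * b ω
  set A : Set Ω := {ω | g ω < 0}
  have hA : MeasurableSet[m] A :=
    measurableSet_lt ((hZRm.mul ha).add (hZSm.mul hb)).measurable measurable_const
  have hsolvent : ∀ ω, 0 ≤ liquidationValue (Sb ω) (Sa ω) (A.indicator a ω) (A.indicator b ω) := by
    intro ω
    by_cases h : ω ∈ A
    · simpa [h] using hab ω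
    · simp [h, liquidationValue]
  have hint := hpos _ _ (ha.indicator hA) (hb.indicator hA) hsolvent
  have hzero : A.indicator g = 0 := by
    refine eq_zero_of_nonpos_of_integral_nonneg Q hQ (fun ω => ?_) ?_
    · by_cases h : ω ∈ A
      · simpa [h] using le_of_lt h
      · simp [h]
    · convert hint using 3 with ω
      by_cases h : ω ∈ A <;> simp [h, g]
  by_contra h
  have hω : ω ∈ A := lt_of_not_ge h
  have hgω : g ω = 0 := by simpa [hω] using congrFun hzero ω
  exact (ne_of_lt hω) hgω

theorem consistent_prices_from_positivity_general
    {Ω : Type*} [Fintype Ω] {m0 : MeasurableSpace Ω} [MeasurableSingletonClass Ω]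
    (Q : Measure Ω) [IsProbabilityMeasure Q] (hQfull : ∀ ω, 0 < Q {ω})
    (m : MeasurableSpace Ω)
    (Sb Sa : Ω → ℝ) (hSb : ∀ ω, 0 < Sb ω)
    (hSbm : StronglyMeasurable[m] Sb) (hSam : StronglyMeasurable[m] Sa)
    (ZR ZS : Ω → ℝ) (hZRm : StronglyMeasurable[m] ZR) (hZSm : StronglyMeasurable[m] ZS)
    (hpos : ∀ α β : Ω → ℝ, StronglyMeasurable[m] α → StronglyMeasurable[m] β →
      (∀ ω, 0 ≤ α ω + max (β ω) 0 * Sb ω - max (-(β ω)) 0 * Sa ω) →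
      0 ≤ ∫ ω, (ZR ω * α ω + ZS ω * β ω) ∂Q) :
    ∀ ω, 0 ≤ ZR ω ∧ 0 ≤ ZS ω ∧ ZR ω * Sb ω ≤ ZS ω ∧ ZS ω ≤ ZR ω * Sa ω := by
  have hZ := nonneg_of_liquidationValue_nonneg (Sb := Sb) (Sa := Sa) (fun ω => (hQfull ω).ne')
    hZRm hZSm hpos
  have hcash : ∀ ω, 0 ≤ ZR ω * 1 + ZS ω * 0 :=
    hZ 1 0 stronglyMeasurable_const stronglyMeasurable_const fun ω => by simp [liquidationValue]
  have hstock : ∀ ω, 0 ≤ ZR ω * 0 + ZS ω * 1 :=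
    hZ 0 1 stronglyMeasurable_const stronglyMeasurable_const fun ω => by
      simp [liquidationValue, (hSb ω).le]
  have hsell : ∀ ω, 0 ≤ ZR ω * Sa ω + ZS ω * -1 :=
    hZ Sa (fun _ => -1) hSam stronglyMeasurable_const fun ω => by simp [liquidationValue]
  have hbuy : ∀ ω, 0 ≤ ZR ω * -Sb ω + ZS ω * 1 :=
    hZ (-Sb) 1 hSbm.neg stronglyMeasurable_const fun ω => by simp [liquidationValue]
  intro ω
  refine ⟨?_, ?_, ?_, ?_⟩ <;> linarith [hcash ω, hstock ω, hsell ω, hbuy ω]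

/-- If `Z = (Z^R, Z^S)` is `F_t`-measurable and `E_Q[Z^R α + Z^S β] ≥ 0` for all
`F_t`-measurable `α, β` with `ϑ_t(α,β) ≥ 0`, then `Z^R, Z^S ≥ 0` and
`Z^R S^b_t ≤ Z^S ≤ Z^R S^a_t` everywhere. -/
theorem consistent_prices_from_positivity
    {Ω : Type*} [Fintype Ω] {m0 : MeasurableSpace Ω} [MeasurableSingletonClass Ω]
    (Q : Measure Ω) [IsProbabilityMeasure Q] (hQfull : ∀ ω, 0 < Q {ω})
    (m : MeasurableSpace Ω) (hm : m ≤ m0)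
    (Sb Sa : Ω → ℝ) (hSb : ∀ ω, 0 < Sb ω) (hba : ∀ ω, Sb ω ≤ Sa ω)
    (hSbm : StronglyMeasurable[m] Sb) (hSam : StronglyMeasurable[m] Sa)
    (ZR ZS : Ω → ℝ) (hZRm : StronglyMeasurable[m] ZR) (hZSm : StronglyMeasurable[m] ZS)
    (hpos : ∀ α β : Ω → ℝ, StronglyMeasurable[m] α → StronglyMeasurable[m] β →
      (∀ ω, 0 ≤ α ω + max (β ω) 0 * Sb ω - max (-(β ω)) 0 * Sa ω) →
      0 ≤ ∫ ω, (ZR ω * α ω + ZS ω * β ω) ∂Q) :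
    ∀ ω, 0 ≤ ZR ω ∧ 0 ≤ ZS ω ∧ ZR ω * Sb ω ≤ ZS ω ∧ ZS ω ≤ ZR ω * Sa ω :=
  consistent_prices_from_positivity_general (m0 := m0) Q hQfull m Sb Sa hSb hSbm hSam ZR ZS hZRm
    hZSm hpos
end

section
/- Given an equivalent martingale triple (P,S,R) with deflator B, define Z^R_T = (1/B_T)(dP/dQ), Z^R_t = R_{t+1} E_Q[Z^R_{t+1} | F_t] for t < T, and Z^S_t = S_t Z^R_t for all t. Then Z^S is a Q-martingale, B Z^R is a Q-martingale, both Z^R and Z^S are strictly positive, and S^b_t ≤ Z^S_t/Z^R_t ≤ S^a_t; i.e. (Z^R, Z^S) is a consistent pricing system. -/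
/-!
Pulling the `ℱ t`-measurable factor `B_{t+1}` out of `E_Q[Z^R_{t+1} | ℱ t]` shows that `B Z^R`
is a `Q`-martingale with terminal value `B_T Z^R_T = dP/dQ`, so `B_t Z^R_t` is the density of `P`
with respect to `Q` on `ℱ t`. Bayes' formula then turns the `P`-martingale `S / B` into the
`Q`-martingale `(S / B) (B Z^R) = Z^S`. Since `Q` has full support, conditional expectations of
strictly positive functions are strictly positive everywhere, which gives positivity of `Z^R` by
backward induction.
-/

open MeasureTheory Finset

section ConditionalExpectation

variable {Ω : Type*} {m m0 : MeasurableSpace Ω} {μ : Measure Ω}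

lemma setIntegral_mul_condExp (hm : m ≤ m0) [SigmaFinite (μ.trim hm)] {f g : Ω → ℝ}
    (hg : StronglyMeasurable[m] g) (hf : Integrable f μ) (hgf : Integrable (g * f) μ)
    {s : Set Ω} (hs : MeasurableSet[m] s) :
    ∫ ω in s, g ω * μ[f|m] ω ∂μ = ∫ ω in s, g ω * f ω ∂μ := by
  calc ∫ ω in s, g ω * μ[f|m] ω ∂μ = ∫ ω in s, μ[g * f|m] ω ∂μ :=
        setIntegral_congr_ae (hm s hs)
          ((condExp_mul_of_stronglyMeasurable_left hg hgf hf).mono fun ω hω _ => hω.symm)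
    _ = ∫ ω in s, g ω * f ω ∂μ := setIntegral_condExp hm hgf hs

lemma condExp_ae_eq_condExp_of_condExp_succ_ae_eq [IsFiniteMeasure μ] (ℱ : Filtration ℕ m0)
    {T : ℕ} {M : ℕ → Ω → ℝ} (hM : ∀ t < T, μ[M (t + 1)|ℱ t] =ᵐ[μ] M t) {t : ℕ} (ht : t ≤ T) :
    μ[M t|ℱ t] =ᵐ[μ] μ[M T|ℱ t] := by
  induction ht using Nat.decreasingInduction with
  | self => rfl
  | of_succ t ht ih =>
    calc μ[M t|ℱ t] =ᵐ[μ] μ[μ[M (t + 1)|ℱ t]|ℱ t] := condExp_congr_ae (hM t ht).symm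
      _ = μ[M (t + 1)|ℱ t] := condExp_of_stronglyMeasurable (ℱ.le t) stronglyMeasurable_condExp
          integrable_condExp
      _ =ᵐ[μ] μ[μ[M (t + 1)|ℱ (t + 1)]|ℱ t] :=
          (condExp_condExp_of_le (ℱ.mono t.le_succ) (ℱ.le (t + 1))).symm
      _ =ᵐ[μ] μ[μ[M T|ℱ (t + 1)]|ℱ t] := condExp_congr_ae ih
      _ =ᵐ[μ] μ[M T|ℱ t] := condExp_condExp_of_le (ℱ.mono t.le_succ) (ℱ.le (t + 1))

lemma setIntegral_withDensity_ofReal {D : Ω → ℝ} (hDm : Measurable D)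
    (hD : ∀ ω, 0 ≤ D ω) (f : Ω → ℝ) {s : Set Ω} (hs : MeasurableSet s) :
    ∫ ω in s, f ω ∂(μ.withDensity fun ω => ENNReal.ofReal (D ω)) = ∫ ω in s, f ω * D ω ∂μ := by
  rw [setIntegral_withDensity_eq_setIntegral_toReal_smul hDm.ennreal_ofReal
    (ae_of_all _ fun _ => ENNReal.ofReal_lt_top) f hs]
  simp only [ENNReal.toReal_ofReal (hD _), smul_eq_mul, mul_comm]

lemma stronglyMeasurable_of_ae_eq_div [Countable Ω] (hμ : ∀ ω, μ {ω} ≠ 0) {f g r : Ω → ℝ}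
    (hf : StronglyMeasurable[m] f) (hf0 : ∀ ω, f ω ≠ 0) (hg : StronglyMeasurable[m] g)
    (hfg : g =ᵐ[μ] fun ω => f ω / r ω) : StronglyMeasurable[m] r := by
  have hr : r = fun ω => f ω / g ω :=
    funext fun ω => by rw [ae_iff_of_countable.1 hfg ω (hμ ω), div_div_cancel₀ (hf0 ω)]
  rw [hr]
  exact (hf.measurable.div hg.measurable).stronglyMeasurable

end ConditionalExpectation

section FiniteSpace

variable {Ω : Type*} [Finite Ω] {m m' m0 : MeasurableSpace Ω} [MeasurableSingletonClass Ω]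
  {μ : Measure Ω} [IsFiniteMeasure μ]

lemma condExp_pos_of_forall_measure_singleton_pos (hμ : ∀ ω, 0 < μ {ω}) (hm : m ≤ m0)
    {f : Ω → ℝ} (hf : ∀ ω, 0 < f ω) (ω : Ω) : 0 < μ[f|m] ω := by
  have : Nonempty Ω := ⟨ω⟩
  obtain ⟨ω₀, hω₀⟩ := Finite.exists_min f
  have hle : (fun _ => f ω₀) ≤ᵐ[μ] μ[f|m] := by
    rw [← condExp_const (μ := μ) hm (f ω₀)]
    exact condExp_mono (integrable_const _) .of_finite (ae_of_all _ hω₀)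
  exact (hf ω₀).trans_le (ae_iff_of_countable.1 hle ω (hμ ω).ne')

lemma pos_of_eq_mul_condExp_succ (hμ : ∀ ω, 0 < μ {ω}) (ℱ : Filtration ℕ m0) {T : ℕ}
    {Z c : ℕ → Ω → ℝ} (hc : ∀ t < T, ∀ ω, 0 < c (t + 1) ω) (hZT : ∀ ω, 0 < Z T ω)
    (hZ : ∀ t < T, ∀ ω, Z t ω = c (t + 1) ω * μ[Z (t + 1)|ℱ t] ω) {t : ℕ} (ht : t ≤ T) (ω : Ω) :
    0 < Z t ω := by
  induction ht using Nat.decreasingInduction generalizing ω with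
  | self => exact hZT ω
  | of_succ t ht ih =>
    rw [hZ t ht ω]
    exact mul_pos (hc t ht ω) (condExp_pos_of_forall_measure_singleton_pos hμ (ℱ.le t) ih ω)

omit [Finite Ω] [IsFiniteMeasure μ] in
lemma withDensity_ofReal_singleton_pos (hμ : ∀ ω, 0 < μ {ω}) {D : Ω → ℝ} (hD : ∀ ω, 0 < D ω)
    (ω : Ω) : 0 < μ.withDensity (fun ω => ENNReal.ofReal (D ω)) {ω} := by
  rw [withDensity_apply _ (measurableSet_singleton ω), lintegral_singleton]
  exact ENNReal.mul_pos (ENNReal.ofReal_pos.mpr (hD ω)).ne' (hμ ω).ne'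

lemma setIntegral_mul_eq_of_condExp_ae_eq (hm : m ≤ m0) {N D g : Ω → ℝ}
    (hND : μ[N|m] =ᵐ[μ] μ[D|m]) (hg : StronglyMeasurable[m] g) {s : Set Ω}
    (hs : MeasurableSet[m] s) : ∫ ω in s, g ω * N ω ∂μ = ∫ ω in s, g ω * D ω ∂μ := by
  calc ∫ ω in s, g ω * N ω ∂μ = ∫ ω in s, g ω * μ[N|m] ω ∂μ :=
        (setIntegral_mul_condExp hm hg .of_finite .of_finite hs).symm
    _ = ∫ ω in s, g ω * μ[D|m] ω ∂μ :=
        setIntegral_congr_ae (hm s hs) (hND.mono fun ω hω _ => by rw [hω])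
    _ = ∫ ω in s, g ω * D ω ∂μ := setIntegral_mul_condExp hm hg .of_finite .of_finite hs

/-- Bayes' formula; `N` and `N'` act as densities of `P` with respect to `μ` on `m` and `m'`. -/
lemma condExp_mul_ae_eq_of_condExp_withDensity (hmm' : m ≤ m')
    (hm' : m' ≤ m0) {P : Measure Ω} [IsFiniteMeasure P] {D : Ω → ℝ} (hD : ∀ ω, 0 ≤ D ω)
    (hP : P = μ.withDensity fun ω => ENNReal.ofReal (D ω)) {X X' N N' : Ω → ℝ}
    (hX : StronglyMeasurable[m] X) (hX' : StronglyMeasurable[m'] X')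
    (hN : μ[N|m] =ᵐ[μ] μ[D|m]) (hN' : μ[N'|m'] =ᵐ[μ] μ[D|m']) (hXX' : P[X'|m] =ᵐ[P] X) :
    μ[fun ω => X' ω * N' ω|m] =ᵐ[μ] μ[fun ω => X ω * N ω|m] := by
  have hm : m ≤ m0 := hmm'.trans hm'
  refine (ae_eq_condExp_of_forall_setIntegral_eq hm .of_finite
    (fun _ _ _ => Integrable.of_finite.integrableOn) (fun s hs _ => ?_)
    stronglyMeasurable_condExp.aestronglyMeasurable).symm
  have hs0 : MeasurableSet s := hm s hs
  have hP_eq (f : Ω → ℝ) : ∫ ω in s, f ω ∂P = ∫ ω in s, f ω * D ω ∂μ := by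
    rw [hP, setIntegral_withDensity_ofReal .of_discrete hD f hs0]
  calc ∫ ω in s, μ[fun ω => X ω * N ω|m] ω ∂μ = ∫ ω in s, X ω * N ω ∂μ :=
        setIntegral_condExp hm .of_finite hs
    _ = ∫ ω in s, X ω ∂P := by rw [hP_eq, setIntegral_mul_eq_of_condExp_ae_eq hm hN hX hs]
    _ = ∫ ω in s, P[X'|m] ω ∂P := setIntegral_congr_ae hs0 (hXX'.mono fun ω hω _ => hω.symm)
    _ = ∫ ω in s, X' ω ∂P := setIntegral_condExp hm .of_finite hs
    _ = ∫ ω in s, X' ω * N' ω ∂μ := by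
        rw [hP_eq, setIntegral_mul_eq_of_condExp_ae_eq hm' hN' hX' (hmm' s hs)]

end FiniteSpace

section Deflator

variable {Ω : Type*} {m0 : MeasurableSpace Ω} {ℱ : Filtration ℕ m0} {Q : Measure Ω}
  {R : ℕ → Ω → ℝ}

lemma stronglyMeasurable_prod_range_of_le (hR0 : StronglyMeasurable[ℱ 0] (R 0))
    (hR : ∀ t, StronglyMeasurable[ℱ t] (R (t + 1))) {t n : ℕ} (hn : n ≤ t + 2) :
    StronglyMeasurable[ℱ t] fun ω => ∏ s ∈ range n, R s ω := by
  refine Finset.stronglyMeasurable_fun_prod _ fun s hs => ?_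
  obtain _ | s := s
  · exact hR0.mono (ℱ.mono t.zero_le)
  · exact (hR s).mono (ℱ.mono (by grind))

/-- `S_0 / R_0` is the `ℱ 0`-measurable conditional expectation of `S_1 / (R_0 R_1)`. -/
lemma stronglyMeasurable_zero_of_condExp_div_ae_eq [Countable Ω] {P : Measure Ω}
    (hP : ∀ ω, P {ω} ≠ 0) {S : ℕ → Ω → ℝ} (hS : StronglyMeasurable[ℱ 0] (S 0))
    (hS0 : ∀ ω, S 0 ω ≠ 0)
    (h : P[fun ω => S 1 ω / ∏ s ∈ range 2, R s ω|ℱ 0]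
      =ᵐ[P] fun ω => S 0 ω / ∏ s ∈ range 1, R s ω) :
    StronglyMeasurable[ℱ 0] (R 0) :=
  stronglyMeasurable_of_ae_eq_div hP hS hS0 stronglyMeasurable_condExp
    (h.trans (ae_of_all _ fun ω => by simp))

lemma condExp_prod_range_mul_ae_eq [Finite Ω] [MeasurableSingletonClass Ω]
    [IsFiniteMeasure Q] {ZR : ℕ → Ω → ℝ} {t : ℕ}
    (hB : StronglyMeasurable[ℱ t] fun ω => ∏ s ∈ range (t + 2), R s ω)
    (hZR : ∀ ω, ZR t ω = R (t + 1) ω * Q[ZR (t + 1)|ℱ t] ω) :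
    Q[fun ω => (∏ s ∈ range (t + 2), R s ω) * ZR (t + 1) ω|ℱ t]
      =ᵐ[Q] fun ω => (∏ s ∈ range (t + 1), R s ω) * ZR t ω := by
  refine (condExp_mul_of_stronglyMeasurable_left (g := ZR (t + 1)) hB .of_finite .of_finite).trans
    (ae_of_all _ fun ω => ?_)
  dsimp only [Pi.mul_apply]
  rw [hZR, show t + 2 = t + 1 + 1 from rfl, prod_range_succ]
  ring

lemma condExp_prod_range_mul_ae_eq_condExp [IsFiniteMeasure Q] {ZR : ℕ → Ω → ℝ} {D : Ω → ℝ}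
    {T : ℕ} (hBT : ∀ ω, ∏ s ∈ range (T + 1), R s ω ≠ 0)
    (hZRT : ∀ ω, ZR T ω = (1 / ∏ s ∈ range (T + 1), R s ω) * D ω)
    (hBZR : ∀ t < T, Q[fun ω => (∏ s ∈ range (t + 2), R s ω) * ZR (t + 1) ω|ℱ t]
      =ᵐ[Q] fun ω => (∏ s ∈ range (t + 1), R s ω) * ZR t ω) {t : ℕ} (ht : t ≤ T) :
    Q[fun ω => (∏ s ∈ range (t + 1), R s ω) * ZR t ω|ℱ t] =ᵐ[Q] Q[D|ℱ t] := by
  have hBZR_T : (fun ω => (∏ s ∈ range (T + 1), R s ω) * ZR T ω) = D := by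
    funext ω
    rw [hZRT, one_div, ← mul_assoc, mul_inv_cancel₀ (hBT ω), one_mul]
  rw [← hBZR_T]
  exact condExp_ae_eq_condExp_of_condExp_succ_ae_eq ℱ
    (M := fun t ω => (∏ s ∈ range (t + 1), R s ω) * ZR t ω) hBZR ht

end Deflator

theorem emt_to_cps_general
    {Ω : Type*} [Fintype Ω] {m0 : MeasurableSpace Ω}
    [MeasurableSingletonClass Ω]
    (ℱ : Filtration ℕ m0) (T : ℕ)
    (Q P : Measure Ω) [IsProbabilityMeasure Q] [IsProbabilityMeasure P]
    (hQfull : ∀ ω, 0 < Q {ω})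
    (D : Ω → ℝ) (hD : ∀ ω, 0 < D ω)
    (hP : P = Q.withDensity fun ω => ENNReal.ofReal (D ω))
    (Sb Sa S Rd Rc R : ℕ → Ω → ℝ)
    (hSb : ∀ t ω, 0 < Sb t ω)
    (hRd : ∀ t ω, 0 < Rd t ω)
    (hSadapt : Adapted ℱ S)
    (hRpred : ∀ t, StronglyMeasurable[ℱ t] (R (t + 1)))
    (hSbd : ∀ t ≤ T, ∀ ω, Sb t ω ≤ S t ω ∧ S t ω ≤ Sa t ω)
    (hRbd : ∀ t ≤ T, ∀ ω, Rd t ω ≤ R t ω ∧ R t ω ≤ Rc t ω)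
    -- S/B is a P-martingale
    (hmart : ∀ t < T,
      P[fun ω => S (t + 1) ω / ∏ s ∈ Finset.range (t + 2), R s ω|ℱ t]
        =ᵐ[P] fun ω => S t ω / ∏ s ∈ Finset.range (t + 1), R s ω)
    (ZR ZS : ℕ → Ω → ℝ)
    (hZRT : ∀ ω, ZR T ω = (1 / ∏ s ∈ Finset.range (T + 1), R s ω) * D ω)
    (hZRt : ∀ t < T, ∀ ω, ZR t ω = R (t + 1) ω * (Q[ZR (t + 1)|ℱ t]) ω)
    (hZS : ∀ t ω, ZS t ω = S t ω * ZR t ω) :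
    (∀ t < T, Q[ZS (t + 1)|ℱ t] =ᵐ[Q] ZS t) ∧
      (∀ t < T,
        Q[fun ω => (∏ s ∈ Finset.range (t + 2), R s ω) * ZR (t + 1) ω|ℱ t]
          =ᵐ[Q] fun ω => (∏ s ∈ Finset.range (t + 1), R s ω) * ZR t ω) ∧
      (∀ t ≤ T, ∀ ω, 0 < ZR t ω ∧ 0 < ZS t ω) ∧
      (∀ t ≤ T, ∀ ω, Sb t ω ≤ ZS t ω / ZR t ω ∧ ZS t ω / ZR t ω ≤ Sa t ω) := by
  have hRpos (s : ℕ) (hs : s ≤ T) (ω : Ω) : 0 < R s ω := (hRd s ω).trans_le (hRbd s hs ω).1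
  have hSpos (t : ℕ) (ht : t ≤ T) (ω : Ω) : 0 < S t ω := (hSb t ω).trans_le (hSbd t ht ω).1
  have hBpos (t : ℕ) (ht : t ≤ T) (ω : Ω) : 0 < ∏ s ∈ range (t + 1), R s ω :=
    prod_pos fun s hs => hRpos s (by grind) ω
  have hPfull (ω : Ω) : P {ω} ≠ 0 := (hP ▸ withDensity_ofReal_singleton_pos hQfull hD ω).ne'
  have hBmeas (hT : 0 < T) {t n : ℕ} (hn : n ≤ t + 2) :
      StronglyMeasurable[ℱ t] fun ω => ∏ s ∈ range n, R s ω :=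
    stronglyMeasurable_prod_range_of_le (stronglyMeasurable_zero_of_condExp_div_ae_eq hPfull
      (hSadapt 0).stronglyMeasurable (fun ω => (hSpos 0 T.zero_le ω).ne') (hmart 0 hT)) hRpred hn
  have hSBmeas (hT : 0 < T) (t : ℕ) :
      StronglyMeasurable[ℱ t] fun ω => S t ω / ∏ s ∈ range (t + 1), R s ω :=
    ((hSadapt t).div (hBmeas hT (by omega)).measurable).stronglyMeasurable
  have hZRpos : ∀ t ≤ T, ∀ ω, 0 < ZR t ω :=
    fun t ht => pos_of_eq_mul_condExp_succ hQfull ℱ (fun t ht => hRpos (t + 1) ht)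
      (fun ω => by rw [hZRT]; exact mul_pos (one_div_pos.2 (hBpos T le_rfl ω)) (hD ω)) hZRt ht
  have hBZR : ∀ t < T, Q[fun ω => (∏ s ∈ range (t + 2), R s ω) * ZR (t + 1) ω|ℱ t]
      =ᵐ[Q] fun ω => (∏ s ∈ range (t + 1), R s ω) * ZR t ω :=
    fun t ht => condExp_prod_range_mul_ae_eq (hBmeas (by omega) le_rfl) (hZRt t ht)
  have hdensity (t : ℕ) (ht : t ≤ T) :=
    condExp_prod_range_mul_ae_eq_condExp (fun ω => (hBpos T le_rfl ω).ne') hZRT hBZR ht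
  have hZS_eq (t : ℕ) (ht : t ≤ T) :
      ZS t = fun ω =>
        S t ω / (∏ s ∈ range (t + 1), R s ω) * ((∏ s ∈ range (t + 1), R s ω) * ZR t ω) :=
    funext fun ω => by rw [hZS, ← mul_assoc, div_mul_cancel₀ _ (hBpos t ht ω).ne']
  refine ⟨fun t ht => ?_, hBZR, fun t ht ω => ⟨hZRpos t ht ω, ?_⟩, fun t ht ω => ?_⟩
  · have hZSt : StronglyMeasurable[ℱ t] (ZS t) := by
      rw [funext (hZS t), funext (hZRt t ht)]
      exact (hSadapt t).stronglyMeasurable.mul ((hRpred t).mul stronglyMeasurable_condExp)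
    rw [hZS_eq (t + 1) ht, ← condExp_of_stronglyMeasurable (μ := Q) (ℱ.le t) hZSt .of_finite,
      hZS_eq t ht.le]
    exact condExp_mul_ae_eq_of_condExp_withDensity (ℱ.mono t.le_succ) (ℱ.le (t + 1))
      (fun ω => (hD ω).le) hP (hSBmeas (by omega) t) (hSBmeas (by omega) (t + 1))
      (hdensity t ht.le) (hdensity (t + 1) ht) (hmart t ht)
  · rw [hZS]
    exact mul_pos (hSpos t ht ω) (hZRpos t ht ω)
  · rw [hZS, mul_div_cancel_right₀ _ (hZRpos t ht ω).ne']
    exact hSbd t ht ω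

/-- Given an equivalent martingale triple `(P, S, R)` with deflator `B` and density
`D = dP/dQ`, the processes `Z^R_T = (1/B_T) D`, `Z^R_t = R_{t+1} E_Q[Z^R_{t+1}|F_t]`,
`Z^S = S Z^R` form a consistent pricing system: `Z^S` and `B Z^R` are strictly
positive `Q`-martingales and `S^b_t ≤ Z^S_t / Z^R_t ≤ S^a_t`. -/
theorem emt_to_cps
    {Ω : Type*} [Fintype Ω] [Nonempty Ω] {m0 : MeasurableSpace Ω}
    [MeasurableSingletonClass Ω]
    (ℱ : Filtration ℕ m0) (T : ℕ)
    (Q P : Measure Ω) [IsProbabilityMeasure Q] [IsProbabilityMeasure P]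
    (hQfull : ∀ ω, 0 < Q {ω})
    (D : Ω → ℝ) (hD : ∀ ω, 0 < D ω)
    (hP : P = Q.withDensity fun ω => ENNReal.ofReal (D ω))
    (Sb Sa S Rd Rc R : ℕ → Ω → ℝ)
    (hSb : ∀ t ω, 0 < Sb t ω) (hba : ∀ t ω, Sb t ω ≤ Sa t ω)
    (hRd : ∀ t ω, 0 < Rd t ω) (hdc : ∀ t ω, Rd t ω ≤ Rc t ω)
    (hSadapt : Adapted ℱ S)
    (hRpred : ∀ t, StronglyMeasurable[ℱ t] (R (t + 1)))
    (hSbd : ∀ t ≤ T, ∀ ω, Sb t ω ≤ S t ω ∧ S t ω ≤ Sa t ω)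
    (hRbd : ∀ t ≤ T, ∀ ω, Rd t ω ≤ R t ω ∧ R t ω ≤ Rc t ω)
    -- S/B is a P-martingale
    (hmart : ∀ t < T,
      P[fun ω => S (t + 1) ω / ∏ s ∈ Finset.range (t + 2), R s ω|ℱ t]
        =ᵐ[P] fun ω => S t ω / ∏ s ∈ Finset.range (t + 1), R s ω)
    (ZR ZS : ℕ → Ω → ℝ)
    (hZRT : ∀ ω, ZR T ω = (1 / ∏ s ∈ Finset.range (T + 1), R s ω) * D ω)
    (hZRt : ∀ t < T, ∀ ω, ZR t ω = R (t + 1) ω * (Q[ZR (t + 1)|ℱ t]) ω)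
    (hZS : ∀ t ω, ZS t ω = S t ω * ZR t ω) :
    (∀ t < T, Q[ZS (t + 1)|ℱ t] =ᵐ[Q] ZS t) ∧
      (∀ t < T,
        Q[fun ω => (∏ s ∈ Finset.range (t + 2), R s ω) * ZR (t + 1) ω|ℱ t]
          =ᵐ[Q] fun ω => (∏ s ∈ Finset.range (t + 1), R s ω) * ZR t ω) ∧
      (∀ t ≤ T, ∀ ω, 0 < ZR t ω ∧ 0 < ZS t ω) ∧
      (∀ t ≤ T, ∀ ω, Sb t ω ≤ ZS t ω / ZR t ω ∧ ZS t ω / ZR t ω ≤ Sa t ω) :=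
  emt_to_cps_general ℱ T Q P hQfull D hD hP Sb Sa S Rd Rc R hSb hRd hSadapt hRpred hSbd hRbd hmart
    ZR ZS hZRT hZRt hZS
end

section
/- If a self-financing strategy (α,β) with stock liquidation at time T (β_{T+1}=0, α_{T+1} = ϑ_T(ϱ_T(α_T), β_T)) satisfies ϑ_T(α_{T+1},β_{T+1}) ≥ 0 with strict inequality on a set of positive Q-probability, and (P,S,R) is an equivalent martingale triple, then E_P[(1/B_T) ϑ_T(α_{T+1},β_{T+1})] ≤ α_0. In particular α_0 > 0. -/
/-!
Evaluate the wedge inequality at the martingale prices `x = S_t`, `r = R_t`. With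
`B_t = R_0 ⋯ R_t` and `V_t = (α_{t+1} + β_{t+1} S_t) / B_t` this gives
`V_{t+1} ≤ α_{t+1} / B_t + β_{t+1} S_{t+1} / B_{t+1}` and `V_0 ≤ α_0`. Since `β_{t+1}` is
`ℱ_t`-measurable and `S / B` is a `P`-martingale, `β_{t+1} S_{t+1} / B_{t+1}` may be replaced by
`β_{t+1} S_t / B_t` under `E_P`, so `t ↦ E_P[V_t]` is nonincreasing. As `β_{T+1} = 0`, `V_T` is
the discounted liquidation value, whence `E_P[V_T] ≤ α_0`; it is positive because the
liquidation value is nonnegative and positive on a set of positive `Q`-, hence `P`-, measure.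
-/

open MeasureTheory Finset

namespace MeasureTheory

theorem Martingale.integral_mul_eq {Ω ι : Type*} {m0 : MeasurableSpace Ω} [Preorder ι]
    {ℱ : Filtration ι m0} {μ : Measure Ω} [IsFiniteMeasure μ] {M : ι → Ω → ℝ}
    (hM : Martingale M ℱ μ) {i j : ι} (hij : i ≤ j) {H : Ω → ℝ}
    (hH : StronglyMeasurable[ℱ i] H) (hHM : Integrable (H * M j) μ) :
    ∫ ω, H ω * M j ω ∂μ = ∫ ω, H ω * M i ω ∂μ := by
  calc ∫ ω, H ω * M j ω ∂μ = ∫ ω, μ[H * M j | ℱ i] ω ∂μ :=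
        (integral_condExp (ℱ.le i)).symm
    _ = ∫ ω, (H * μ[M j | ℱ i]) ω ∂μ :=
      integral_congr_ae (condExp_mul_of_stronglyMeasurable_left hH hHM (hM.integrable j))
    _ = ∫ ω, H ω * M i ω ∂μ :=
      integral_congr_ae <| (hM.condExp_ae_eq hij).mono fun ω hω => by
        simp only [Pi.mul_apply, hω]

theorem integral_pos_of_absolutelyContinuous {Ω : Type*} {m0 : MeasurableSpace Ω}
    {P Q : Measure Ω} (hQP : Q ≪ P) {f : Ω → ℝ} (hf : 0 ≤ f) (hfi : Integrable f P)
    (hpos : 0 < Q {ω | 0 < f ω}) : 0 < ∫ ω, f ω ∂P := by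
  have hsupp : Function.support f = {ω | 0 < f ω} := by
    ext ω
    exact (hf ω).lt_iff_ne'.symm
  rw [integral_pos_iff_support_of_nonneg hf hfi, hsupp, pos_iff_ne_zero]
  exact fun h => hpos.ne' (hQP h)

end MeasureTheory

section Strategy

variable {Ω : Type*}

def deflator (R : ℕ → Ω → ℝ) (t : ℕ) (ω : Ω) : ℝ := ∏ s ∈ range (t + 1), R s ω

/-- `(α (t + 1), β (t + 1))` is the position held over the period `(t, t + 1]`. -/
noncomputable def discountedValue (α β S R : ℕ → Ω → ℝ) (t : ℕ) (ω : Ω) : ℝ :=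
  (α (t + 1) ω + β (t + 1) ω * S t ω) / deflator R t ω

section Pointwise

variable {α β S R : ℕ → Ω → ℝ}

theorem deflator_pos (hR : ∀ t ω, 0 < R t ω) (t : ℕ) (ω : Ω) : 0 < deflator R t ω :=
  prod_pos fun s _ => hR s ω

theorem deflator_succ (t : ℕ) (ω : Ω) :
    deflator R (t + 1) ω = deflator R t ω * R (t + 1) ω :=
  prod_range_succ _ _

theorem deflator_zero (ω : Ω) : deflator R 0 ω = R 0 ω := by
  simp [deflator]

theorem discountedValue_zero_le {ω : Ω} (hR : 0 < R 0 ω) (hβ0 : β 0 ω = 0)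
    (hsf : α 1 ω + β 1 ω * S 0 ω ≤ α 0 ω * R 0 ω + β 0 ω * S 0 ω) :
    discountedValue α β S R 0 ω ≤ α 0 ω := by
  rw [hβ0, zero_mul, add_zero] at hsf
  rw [discountedValue, deflator_zero, div_le_iff₀ hR]
  exact hsf

theorem discountedValue_succ_le (hR : ∀ t ω, 0 < R t ω) {t : ℕ} {ω : Ω}
    (hsf : α (t + 2) ω + β (t + 2) ω * S (t + 1) ω ≤
      α (t + 1) ω * R (t + 1) ω + β (t + 1) ω * S (t + 1) ω) :
    discountedValue α β S R (t + 1) ω ≤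
      α (t + 1) ω / deflator R t ω + β (t + 1) ω * (S (t + 1) ω / deflator R (t + 1) ω) := by
  have hB := deflator_pos hR t ω
  have hRt := hR (t + 1) ω
  calc discountedValue α β S R (t + 1) ω
      ≤ (α (t + 1) ω * R (t + 1) ω + β (t + 1) ω * S (t + 1) ω) / deflator R (t + 1) ω :=
        div_le_div_of_nonneg_right hsf (deflator_pos hR _ ω).le
    _ = _ := by
        rw [deflator_succ]
        field_simp

end Pointwise

section Expectation

variable [Finite Ω] {m0 : MeasurableSpace Ω} [MeasurableSingletonClass Ω]
  {ℱ : Filtration ℕ m0} {P : Measure Ω} [IsFiniteMeasure P] {α β S R : ℕ → Ω → ℝ}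

theorem integral_discountedValue_succ_le
    (hmart : Martingale (fun t ω => S t ω / deflator R t ω) ℱ P) (hR : ∀ t ω, 0 < R t ω)
    {t : ℕ} (hβ : StronglyMeasurable[ℱ t] (β (t + 1)))
    (hsf : ∀ ω, α (t + 2) ω + β (t + 2) ω * S (t + 1) ω ≤
      α (t + 1) ω * R (t + 1) ω + β (t + 1) ω * S (t + 1) ω) :
    ∫ ω, discountedValue α β S R (t + 1) ω ∂P ≤
      ∫ ω, discountedValue α β S R t ω ∂P := by
  have hI : ∀ f : Ω → ℝ, Integrable f P := fun f => .of_finite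
  have hmartingale_transform := hmart.integral_mul_eq t.le_succ hβ (hI _)
  calc ∫ ω, discountedValue α β S R (t + 1) ω ∂P
      ≤ ∫ ω, α (t + 1) ω / deflator R t ω +
          β (t + 1) ω * (S (t + 1) ω / deflator R (t + 1) ω) ∂P :=
        integral_mono (hI _) (hI _) fun ω => discountedValue_succ_le hR (hsf ω)
    _ = ∫ ω, α (t + 1) ω / deflator R t ω +
          β (t + 1) ω * (S t ω / deflator R t ω) ∂P := by
        rw [integral_add (hI _) (hI _), integral_add (hI _) (hI _), hmartingale_transform]
    _ = ∫ ω, discountedValue α β S R t ω ∂P := by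
        simp only [discountedValue, add_div, mul_div_assoc]

theorem integral_discountedValue_le_integral_zero
    (hmart : Martingale (fun t ω => S t ω / deflator R t ω) ℱ P) (hR : ∀ t ω, 0 < R t ω)
    {T : ℕ} (hβ : ∀ t < T, StronglyMeasurable[ℱ t] (β (t + 1)))
    (hsf : ∀ t ≤ T, ∀ ω,
      α (t + 1) ω + β (t + 1) ω * S t ω ≤ α t ω * R t ω + β t ω * S t ω) :
    ∫ ω, discountedValue α β S R T ω ∂P ≤
      ∫ ω, discountedValue α β S R 0 ω ∂P := by
  induction T with
  | zero => exact le_rfl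
  | succ t ih =>
    refine (integral_discountedValue_succ_le hmart hR (hβ t t.lt_succ_self)
      (hsf (t + 1) le_rfl)).trans (ih (fun s hs => hβ s (hs.trans t.lt_succ_self)) ?_)
    exact fun s hs => hsf s (hs.trans t.le_succ)

end Expectation

end Strategy

theorem arbitrage_profit_bound_general
    {Ω : Type*} [Fintype Ω] {m0 : MeasurableSpace Ω}
    [MeasurableSingletonClass Ω]
    (ℱ : Filtration ℕ m0) (T : ℕ) (hℱ0 : (ℱ 0 : MeasurableSpace Ω) = ⊥)
    (Q P : Measure Ω) [IsProbabilityMeasure P]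
    (hQP : Q ≪ P)
    (Sb Sa S Rd Rc R : ℕ → Ω → ℝ)
    (hRd : ∀ t ω, 0 < Rd t ω)
    (hSbd : ∀ t ω, Sb t ω ≤ S t ω ∧ S t ω ≤ Sa t ω)
    (hRbd : ∀ t ω, Rd t ω ≤ R t ω ∧ R t ω ≤ Rc t ω)
    (hmart : Martingale
      (fun t ω => S t ω / ∏ s ∈ Finset.range (t + 1), R s ω) ℱ P)
    (α β : ℕ → Ω → ℝ)
    (hβ0 : β 0 = 0) (hβT1 : β (T + 1) = 0)
    (hα0m : StronglyMeasurable[ℱ 0] (α 0))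
    (hpred : ∀ t ≤ T, StronglyMeasurable[ℱ t] (α (t + 1)) ∧
      StronglyMeasurable[ℱ t] (β (t + 1)))
    -- self-financing (wedge form)
    (hsf : ∀ t ≤ T, ∀ ω, ∀ x ∈ Set.Icc (Sb t ω) (Sa t ω),
      ∀ r ∈ Set.Icc (Rd t ω) (Rc t ω),
      α (t + 1) ω + β (t + 1) ω * x ≤ α t ω * r + β t ω * x)
    (hnn : ∀ ω, 0 ≤ α (T + 1) ω + max (β (T + 1) ω) 0 * Sb T ω
      - max (-(β (T + 1) ω)) 0 * Sa T ω)
    (hpos : 0 < Q {ω | 0 < α (T + 1) ω + max (β (T + 1) ω) 0 * Sb T ω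
      - max (-(β (T + 1) ω)) 0 * Sa T ω}) :
    ∀ ω₀,
      (∫ ω, (1 / ∏ s ∈ Finset.range (T + 1), R s ω) *
          (α (T + 1) ω + max (β (T + 1) ω) 0 * Sb T ω
            - max (-(β (T + 1) ω)) 0 * Sa T ω) ∂P) ≤ α 0 ω₀ ∧
      0 < α 0 ω₀ := by
  intro ω₀
  have hR : ∀ t ω, 0 < R t ω := fun t ω => (hRd t ω).trans_le (hRbd t ω).1
  have hsfS : ∀ t ≤ T, ∀ ω,
      α (t + 1) ω + β (t + 1) ω * S t ω ≤ α t ω * R t ω + β t ω * S t ω :=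
    fun t ht ω => hsf t ht ω _ (hSbd t ω) _ (hRbd t ω)
  obtain ⟨c, hc⟩ := stronglyMeasurable_bot_iff.mp (hℱ0 ▸ hα0m)
  simp only [hβT1, Pi.zero_apply, neg_zero, max_self, zero_mul, add_zero, sub_zero] at hnn hpos ⊢
  have hterminal : ∀ ω, (1 / ∏ s ∈ range (T + 1), R s ω) * α (T + 1) ω =
      discountedValue α β S R T ω := fun ω => by
    simp [discountedValue, deflator, hβT1, div_eq_inv_mul]
  have hbound : ∫ ω, discountedValue α β S R T ω ∂P ≤ c :=
    calc ∫ ω, discountedValue α β S R T ω ∂P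
        ≤ ∫ ω, discountedValue α β S R 0 ω ∂P :=
          integral_discountedValue_le_integral_zero hmart hR (fun t ht => (hpred t ht.le).2) hsfS
      _ ≤ ∫ _, c ∂P := integral_mono .of_finite .of_finite fun ω =>
          (discountedValue_zero_le (hR 0 ω) (congrFun hβ0 ω) (hsfS 0 T.zero_le ω)).trans_eq
            (congrFun hc ω)
      _ = c := by simp
  have hprofit : 0 < ∫ ω, discountedValue α β S R T ω ∂P := by
    refine integral_pos_of_absolutelyContinuous hQP (fun ω => ?_) .of_finite ?_
    · rw [← hterminal]
      exact mul_nonneg (one_div_pos.mpr (deflator_pos hR T ω)).le (hnn ω)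
    · simpa [← hterminal, mul_pos_iff_of_pos_left, deflator, prod_pos, hR] using hpos
  simp only [hterminal, hc]
  exact ⟨hbound, hprofit.trans_le hbound⟩

/-- For a self-financing strategy with stock liquidation at `T` whose terminal
liquidation value is nonnegative and positive with positive `Q`-probability, and an
equivalent martingale triple `(P,S,R)`, one has
`E_P[(1/B_T) ϑ_T(α_{T+1},β_{T+1})] ≤ α_0`; in particular `α_0 > 0`. -/
theorem arbitrage_profit_bound
    {Ω : Type*} [Fintype Ω] [Nonempty Ω] {m0 : MeasurableSpace Ω}
    [MeasurableSingletonClass Ω]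
    (ℱ : Filtration ℕ m0) (T : ℕ) (hℱ0 : (ℱ 0 : MeasurableSpace Ω) = ⊥)
    (Q P : Measure Ω) [IsProbabilityMeasure Q] [IsProbabilityMeasure P]
    (hQfull : ∀ ω, 0 < Q {ω}) (hPQ : P ≪ Q) (hQP : Q ≪ P)
    (Sb Sa S Rd Rc R : ℕ → Ω → ℝ)
    (hSb : ∀ t ω, 0 < Sb t ω) (hba : ∀ t ω, Sb t ω ≤ Sa t ω)
    (hRd : ∀ t ω, 0 < Rd t ω) (hdc : ∀ t ω, Rd t ω ≤ Rc t ω)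
    (hSadapt : Adapted ℱ S)
    (hRpred : ∀ t, StronglyMeasurable[ℱ t] (R (t + 1)))
    (hSbd : ∀ t ω, Sb t ω ≤ S t ω ∧ S t ω ≤ Sa t ω)
    (hRbd : ∀ t ω, Rd t ω ≤ R t ω ∧ R t ω ≤ Rc t ω)
    (hmart : Martingale
      (fun t ω => S t ω / ∏ s ∈ Finset.range (t + 1), R s ω) ℱ P)
    (α β : ℕ → Ω → ℝ)
    (hβ0 : β 0 = 0) (hβT1 : β (T + 1) = 0)
    (hα0m : StronglyMeasurable[ℱ 0] (α 0))
    (hpred : ∀ t ≤ T, StronglyMeasurable[ℱ t] (α (t + 1)) ∧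
      StronglyMeasurable[ℱ t] (β (t + 1)))
    -- self-financing (wedge form)
    (hsf : ∀ t ≤ T, ∀ ω, ∀ x ∈ Set.Icc (Sb t ω) (Sa t ω),
      ∀ r ∈ Set.Icc (Rd t ω) (Rc t ω),
      α (t + 1) ω + β (t + 1) ω * x ≤ α t ω * r + β t ω * x)
    -- liquidation: α_{T+1} = ϑ_T(ϱ_T(α_T), β_T)
    (hliq : ∀ ω, α (T + 1) ω =
      (max (α T ω) 0 * Rd T ω - max (-(α T ω)) 0 * Rc T ω)
        + max (β T ω) 0 * Sb T ω - max (-(β T ω)) 0 * Sa T ω)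
    (hnn : ∀ ω, 0 ≤ α (T + 1) ω + max (β (T + 1) ω) 0 * Sb T ω
      - max (-(β (T + 1) ω)) 0 * Sa T ω)
    (hpos : 0 < Q {ω | 0 < α (T + 1) ω + max (β (T + 1) ω) 0 * Sb T ω
      - max (-(β (T + 1) ω)) 0 * Sa T ω}) :
    ∀ ω₀,
      (∫ ω, (1 / ∏ s ∈ Finset.range (T + 1), R s ω) *
          (α (T + 1) ω + max (β (T + 1) ω) 0 * Sb T ω
            - max (-(β (T + 1) ω)) 0 * Sa T ω) ∂P) ≤ α 0 ω₀ ∧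
      0 < α 0 ω₀ :=
  arbitrage_profit_bound_general ℱ T hℱ0 Q P hQP Sb Sa S Rd Rc R hRd hSbd hRbd hmart α β hβ0 hβT1
    hα0m hpred hsf hnn hpos
end
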